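/- arXiv:2204.08052 — 4 statements merged into one kernel-verified Lean document; each statement's English description precedes it below -/
import Mathlib

section
/- For N ≥ 2, the homomorphism sending each braid generator to 1 ∈ ℤ gives an abelianization of the braid group: there is a group isomorphism from the abelianization of B_N onto ℤ which sends the class of each generator σ_i to 1. -/
/-- The braid relations on `m` generators `σ_0, …, σ_{m-1}`:
commutation `σ_i σ_j = σ_j σ_i` when `|i - j| ≥ 2`, and
the Yang–Baxter relation `σ_i σ_{i+1} σ_i = σ_{i+1} σ_i σ_{i+1}`. -/
def braidRels (m : ℕ) : Set (FreeGroup (Fin m)) :=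
  {r | (∃ i j : Fin m, 2 ≤ |(i : ℤ) - (j : ℤ)| ∧
          r = FreeGroup.of i * FreeGroup.of j * (FreeGroup.of i)⁻¹ * (FreeGroup.of j)⁻¹) ∨
       (∃ i j : Fin m, (j : ℕ) = (i : ℕ) + 1 ∧
          r = FreeGroup.of i * FreeGroup.of j * FreeGroup.of i *
              (FreeGroup.of j * FreeGroup.of i * FreeGroup.of j)⁻¹)}

/-- The braid group on `N` strands, presented by the `N - 1` generators
`σ_0, …, σ_{N-2}` subject to the braid relations. -/
def BraidGroup (N : ℕ) : Type := PresentedGroup (braidRels (N - 1))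

instance (N : ℕ) : Group (BraidGroup N) := by unfold BraidGroup; infer_instance

/-- The `i`-th braid generator `σ_i` of the braid group on `N` strands. -/
def braidGen {N : ℕ} (i : Fin (N - 1)) : BraidGroup N := PresentedGroup.of i

/-! Every braid relation has total exponent zero, so `σ_i ↦ 1` defines an exponent-sum map
`B_N → ℤ`. Conversely, in the abelianization the relation `σ_i σ_{i+1} σ_i = σ_{i+1} σ_i σ_{i+1}`
collapses to `σ_i = σ_{i+1}`, so all generators have the same class and the abelianization is
cyclic, generated by the class of `σ_0`, which the exponent-sum map sends to `1`. -/

theorem eq_of_mul_mul_eq_mul_mul {M : Type*} [CancelCommMonoid M] {a b : M}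
    (h : a * b * a = b * a * b) : a = b :=
  mul_right_cancel (a := a) (b := b * a) (by rw [← mul_assoc, h, mul_assoc, mul_comm a b])

namespace BraidGroup

variable {N : ℕ}

theorem braidGen_mul_braidGen_mul_braidGen {i j : Fin (N - 1)} (hij : (j : ℕ) = i + 1) :
    braidGen (N := N) i * braidGen j * braidGen i = braidGen j * braidGen i * braidGen j := by
  have h := PresentedGroup.mk_eq_mk_of_mul_inv_mem (rels := braidRels (N - 1))
    (Or.inr ⟨i, j, hij, rfl⟩)
  simp only [map_mul] at h
  exact h

theorem lift_ofAdd_one_braidRels {r : FreeGroup (Fin (N - 1))} (hr : r ∈ braidRels (N - 1)) :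
    FreeGroup.lift (fun _ ↦ Multiplicative.ofAdd (1 : ℤ)) r = 1 := by
  rcases hr with ⟨i, j, -, rfl⟩ | ⟨i, j, -, rfl⟩ <;> simp

def exponentSum (N : ℕ) : BraidGroup N →* Multiplicative ℤ :=
  PresentedGroup.toGroup fun _ ↦ lift_ofAdd_one_braidRels

@[simp]
theorem exponentSum_braidGen (i : Fin (N - 1)) :
    exponentSum N (braidGen i) = Multiplicative.ofAdd 1 :=
  PresentedGroup.toGroup.of _

theorem of_braidGen_eq_of_braidGen_succ {i j : Fin (N - 1)} (hij : (j : ℕ) = i + 1) :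
    Abelianization.of (braidGen (N := N) i) = Abelianization.of (braidGen j) :=
  eq_of_mul_mul_eq_mul_mul <| by
    simpa only [map_mul] using congrArg Abelianization.of (braidGen_mul_braidGen_mul_braidGen hij)

theorem of_braidGen_eq_of_braidGen_zero (hN : 2 ≤ N) (i : Fin (N - 1)) :
    Abelianization.of (braidGen (N := N) i) = Abelianization.of (braidGen ⟨0, by omega⟩) := by
  obtain ⟨n, hn⟩ := i
  induction n with
  | zero => rfl
  | succ k ih => rw [← of_braidGen_eq_of_braidGen_succ (i := ⟨k, by omega⟩) rfl, ih]

end BraidGroup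

open BraidGroup in
/-- For `N ≥ 2`, the homomorphism sending each braid generator to `1 ∈ ℤ` realizes the
abelianization of the braid group: the abelianization of `B_N` is isomorphic to `ℤ`,
with the class of each generator `σ_i` mapped to `1`. -/
theorem braid_abelianization_eq_int (N : ℕ) (hN : 2 ≤ N) :
    ∃ e : Abelianization (BraidGroup N) ≃* Multiplicative ℤ,
      ∀ i : Fin (N - 1),
        e (Abelianization.of (braidGen i)) = Multiplicative.ofAdd 1 := by
  let σ₀ : Fin (N - 1) := ⟨0, by omega⟩
  let φ := Abelianization.lift (exponentSum N)
  let ψ := zpowersHom _ (Abelianization.of (braidGen (N := N) σ₀))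
  have hφ (i : Fin (N - 1)) : φ (Abelianization.of (braidGen i)) = Multiplicative.ofAdd 1 := by
    simp [φ]
  have hψ : ψ (Multiplicative.ofAdd 1) = Abelianization.of (braidGen σ₀) := by simp [ψ]
  refine ⟨φ.toMulEquiv ψ ?_ ?_, hφ⟩
  · refine Abelianization.hom_ext _ _ (PresentedGroup.ext fun i ↦ ?_)
    change ψ (φ (Abelianization.of (braidGen i))) = Abelianization.of (braidGen i)
    rw [hφ, hψ, of_braidGen_eq_of_braidGen_zero hN i]
  · ext
    change φ (ψ (Multiplicative.ofAdd 1)) = Multiplicative.ofAdd 1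
    rw [hψ, hφ]
end

section
/- Let n ≥ 1 and let Ψ : ℝ → Matrix (Fin n) (Fin n) ℂ be continuously differentiable with Ψ(t) invertible for every t, and suppose the eigenframe closes up to a permutation: Ψ(2π) = P_σ * Ψ(0), where P_σ is the permutation matrix of a permutation σ of Fin n. Then the global biorthogonal Berry phase factor equals the parity of the permutation: exp( ∫_0^{2π} trace( (Ψ(t))⁻¹ * Ψ′(t) ) dt ) = sign(σ), where sign(σ) ∈ {+1, −1} is viewed as a complex number. -/
open Matrix Real

/-- The permutation matrix of `σ ∈ Perm (Fin n)`, with `(i, j)` entry `1` if `i = σ j`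
and `0` otherwise. -/
noncomputable def permMatrix (n : ℕ) (σ : Equiv.Perm (Fin n)) : Matrix (Fin n) (Fin n) ℂ :=
  Matrix.of fun i j => if i = σ j then 1 else 0

/-!
Jacobi's formula `(det Ψ)' = det Ψ · tr (Ψ⁻¹ Ψ')` says that `det Ψ` solves a scalar
linear ODE whose coefficient is the integrand, so
`det Ψ(2π) = det Ψ(0) · exp ∫₀^{2π} tr (Ψ⁻¹ Ψ')`. On the other hand
`det Ψ(2π) = det P_σ · det Ψ(0) = sign σ · det Ψ(0)`, and `det Ψ(0) ≠ 0`.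
-/

namespace Matrix

variable {ι R : Type*} [Fintype ι] [DecidableEq ι]

theorem trace_adjugate_mul [CommRing R] (A B : Matrix ι ι R) :
    (A.adjugate * B).trace = ∑ i, (A.updateCol i fun k => B k i).det := by
  refine Finset.sum_congr rfl fun i _ => ?_
  rw [← cramer_apply, cramer_eq_adjugate_mulVec]
  rfl

theorem prod_perm_updateCol [CommMonoid R] (A : Matrix ι ι R) (b : ι → R) (i : ι)
    (σ : Equiv.Perm ι) :
    ∏ j, A.updateCol i b (σ j) j = b (σ i) * ∏ j ∈ Finset.univ.erase i, A (σ j) j := by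
  rw [← Finset.mul_prod_erase _ _ (Finset.mem_univ i), updateCol_self]
  congr 1
  refine Finset.prod_congr rfl fun j hj => ?_
  rw [updateCol_ne (Finset.ne_of_mem_erase hj)]

end Matrix

theorem det_permMatrix {n : ℕ} (σ : Equiv.Perm (Fin n)) :
    (permMatrix n σ).det = ((Equiv.Perm.sign σ : ℤ) : ℂ) := by
  have h : permMatrix n σ = (σ.permMatrix ℂ)ᵀ := by
    ext i j
    simp [permMatrix, Equiv.Perm.permMatrix, PEquiv.toMatrix_apply, Equiv.toPEquiv_apply,
      eq_comm]
  rw [h, det_transpose, det_permutation]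

section Jacobi

variable {𝕜 R ι : Type*} [NontriviallyNormedField 𝕜] [NormedCommRing R]
  [NormedAlgebra 𝕜 R] [Fintype ι] [DecidableEq ι]
  {A : 𝕜 → Matrix ι ι R} {A' : Matrix ι ι R} {t : 𝕜}

theorem hasDerivAt_det_sum_updateCol
    (hA : ∀ i j, HasDerivAt (fun s => A s i j) (A' i j) t) :
    HasDerivAt (fun s => (A s).det) (∑ i, ((A t).updateCol i fun k => A' k i).det) t := by
  have hterm (σ : Equiv.Perm ι) :
      HasDerivAt (fun s => (Equiv.Perm.sign σ : R) * ∏ i, A s (σ i) i)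
        ((Equiv.Perm.sign σ : R) * ∑ i, A' (σ i) i * ∏ j ∈ Finset.univ.erase i, A t (σ j) j)
        t := by
    refine ((HasDerivAt.fun_finsetProd fun i _ => hA (σ i) i).const_mul _).congr_deriv ?_
    simp only [smul_eq_mul, mul_comm]
  simp only [det_apply']
  refine (HasDerivAt.fun_sum fun σ _ => hterm σ).congr_deriv ?_
  simp only [prod_perm_updateCol, Finset.mul_sum]
  exact Finset.sum_comm

theorem hasDerivAt_det (hA : ∀ i j, HasDerivAt (fun s => A s i j) (A' i j) t) :
    HasDerivAt (fun s => (A s).det) ((A t).adjugate * A').trace t := by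
  rw [trace_adjugate_mul]
  exact hasDerivAt_det_sum_updateCol hA

theorem hasDerivAt_det_of_isUnit (hA : ∀ i j, HasDerivAt (fun s => A s i j) (A' i j) t)
    (hunit : IsUnit (A t)) :
    HasDerivAt (fun s => (A s).det) ((A t).det * ((A t)⁻¹ * A').trace) t := by
  have hdet : IsUnit (A t).det := (isUnit_iff_isUnit_det _).mp hunit
  convert hasDerivAt_det hA using 1
  rw [inv_def, smul_mul_assoc, trace_smul, smul_eq_mul, ← mul_assoc,
    Ring.mul_inverse_cancel _ hdet, one_mul]

end Jacobi

theorem eq_mul_exp_integral_of_hasDerivAt {f g : ℝ → ℂ}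
    (hf : ∀ t, HasDerivAt f (f t * g t) t) (hg : Continuous g) (a b : ℝ) :
    f b = f a * Complex.exp (∫ t in a..b, g t) := by
  set G : ℝ → ℂ := fun s => ∫ t in a..s, g t
  have hG (s : ℝ) : HasDerivAt G (g s) s := (hg.integral_hasStrictDerivAt a s).hasDerivAt
  have hconst (s : ℝ) : HasDerivAt (fun s => f s * Complex.exp (-G s)) 0 s := by
    refine ((hf s).fun_mul (hG s).fun_neg.cexp).congr_deriv ?_
    ring
  have key : f b * Complex.exp (-G b) = f a * Complex.exp (-G a) :=
    is_const_of_deriv_eq_zero (fun s => (hconst s).differentiableAt)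
      (fun s => (hconst s).deriv) _ _
  simp only [G, intervalIntegral.integral_same, neg_zero, Complex.exp_zero, mul_one,
    Complex.exp_neg] at key
  rw [← key, inv_mul_cancel_right₀ (Complex.exp_ne_zero _)]

theorem berry_phase_factor_eq_perm_sign_general (n : ℕ)
    (Ψ Ψ' : ℝ → Matrix (Fin n) (Fin n) ℂ)
    (hderiv : ∀ i j t, HasDerivAt (fun s => Ψ s i j) (Ψ' t i j) t)
    (hcont : ∀ i j, Continuous fun t => Ψ' t i j)
    (hinv : ∀ t, IsUnit (Ψ t))
    (σ : Equiv.Perm (Fin n))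
    (hper : Ψ (2 * π) = permMatrix n σ * Ψ 0) :
    Complex.exp (∫ t in (0:ℝ)..(2 * π), ((Ψ t)⁻¹ * Ψ' t).trace) =
      ((Equiv.Perm.sign σ : ℤ) : ℂ) := by
  have hΨ : Continuous Ψ := continuous_matrix fun i j =>
    continuous_iff_continuousAt.mpr fun t => (hderiv i j t).continuousAt
  have hΨinv : Continuous fun t => (Ψ t)⁻¹ := continuous_iff_continuousAt.mpr fun t =>
    (continuousAt_matrix_inv _
      (NormedRing.inverse_continuousAt ((isUnit_iff_isUnit_det _).mp (hinv t)).unit)).comp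
      hΨ.continuousAt
  have hdet0 : (Ψ 0).det ≠ 0 := ((isUnit_iff_isUnit_det _).mp (hinv 0)).ne_zero
  have hode := eq_mul_exp_integral_of_hasDerivAt
    (fun t => hasDerivAt_det_of_isUnit (fun i j => hderiv i j t) (hinv t))
    (hΨinv.matrix_mul (continuous_matrix hcont)).matrix_trace 0 (2 * π)
  rw [hper, det_mul, det_permMatrix, mul_comm] at hode
  exact (mul_left_cancel₀ hdet0 hode).symm

/-- **Global biorthogonal Berry phase equals the parity of the eigenvalue permutation.**
If the continuously differentiable frame of eigenvectors `Ψ` (with entrywise derivative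
`Ψ'`, invertible at every `t`) closes up to a permutation, `Ψ(2π) = P_σ Ψ(0)`, then
`exp (∫_0^{2π} trace (Ψ(t)⁻¹ Ψ'(t)) dt) = sign σ`, i.e. the global biorthogonal Berry
phase factor `exp(iΘ)` equals the parity of the permutation `σ`. -/
theorem berry_phase_factor_eq_perm_sign (n : ℕ) (hn : 1 ≤ n)
    (Ψ Ψ' : ℝ → Matrix (Fin n) (Fin n) ℂ)
    (hderiv : ∀ i j t, HasDerivAt (fun s => Ψ s i j) (Ψ' t i j) t)
    (hcont : ∀ i j, Continuous fun t => Ψ' t i j)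
    (hinv : ∀ t, IsUnit (Ψ t))
    (σ : Equiv.Perm (Fin n))
    (hper : Ψ (2 * π) = permMatrix n σ * Ψ 0) :
    Complex.exp (∫ t in (0:ℝ)..(2 * π), ((Ψ t)⁻¹ * Ψ' t).trace) =
      ((Equiv.Perm.sign σ : ℤ) : ℂ) :=
  berry_phase_factor_eq_perm_sign_general n Ψ Ψ' hderiv hcont hinv σ hper
end

section
/- (G-symmetry–protected quantized Berry phase.) Let n ≥ 1, and let ψα, ψβ : ℝ → ℂⁿ be continuously differentiable, 2π-periodic maps with ⟪ψα(φ), ψβ(φ)⟫ = 1 for all φ. Let G be an n×n complex matrix with G†·G = 1 and G·G = 1 (a unitary twofold point-group operator), and suppose there are differentiable functions ρα, ρβ : ℝ → ℂ such that for all φ, G·ψα(φ) = ρα(φ)·ψα(−φ) and G·ψβ(φ) = ρβ(φ)·ψβ(−φ). Then the Berry phase θ^{αβ} = −i ∫_{−π}^{π} ⟪ψα(φ), ψβ′(φ)⟫ dφ satisfies exp(i θ^{αβ}) = ρα(0)·ρα(π); moreover ρα(0) and ρα(π) each square to 1, i.e. they are the G-parities ±1 of the states at the two G-invariant points, so the Berry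 phase is quantized to 0 or π modulo 2π. -/
/-! Unitarity of `G` gives `conj ρα · ρβ = 1`, and differentiating `G ψβ(φ) = ρβ(φ) ψβ(-φ)`
shows that the Berry connection `A(φ) = ⟪ψα(φ), ψβ'(φ)⟫` satisfies
`A(φ) + A(-φ) = conj ρα(φ) · ρβ'(φ) = ρβ'(φ) / ρβ(φ)`. Folding the loop at `0`,
`∫_{-π}^{π} A = ∫_0^π ρβ'/ρβ`, whose exponential is `ρβ(π) / ρβ(0)`. At the `G`-invariant
points `0` and `π`, `G² = 1` forces `ρα² = 1`, so there `ρα = ±1 = conj ρα = ρβ`. -/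

open Matrix Real

/-- The standard Hermitian inner product `⟪x, y⟫ = Σᵢ conj (x i) * y i` on `ℂⁿ`,
conjugate-linear in the first argument. -/
noncomputable def herm {n : ℕ} (x y : Fin n → ℂ) : ℂ :=
  ∑ i, starRingEnd ℂ (x i) * y i

section Herm

variable {n : ℕ}

theorem herm_eq_star_dotProduct (x y : Fin n → ℂ) : herm x y = star x ⬝ᵥ y := rfl

@[simp]
theorem herm_zero_left (y : Fin n → ℂ) : herm 0 y = 0 := by
  simp [herm]

@[simp]
theorem herm_smul_left (a : ℂ) (x y : Fin n → ℂ) :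
    herm (a • x) y = starRingEnd ℂ a * herm x y := by
  simp [herm, Finset.mul_sum, mul_assoc]

@[simp]
theorem herm_smul_right (a : ℂ) (x y : Fin n → ℂ) : herm x (a • y) = a * herm x y := by
  simp [herm, Finset.mul_sum, mul_left_comm]

@[simp]
theorem herm_sub_right (x y z : Fin n → ℂ) : herm x (y - z) = herm x y - herm x z := by
  simp [herm, mul_sub]

theorem herm_mulVec_mulVec {G : Matrix (Fin n) (Fin n) ℂ} (hG : Gᴴ * G = 1)
    (x y : Fin n → ℂ) : herm (G *ᵥ x) (G *ᵥ y) = herm x y := by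
  rw [herm_eq_star_dotProduct, herm_eq_star_dotProduct, star_mulVec, dotProduct_mulVec,
    vecMul_vecMul, hG, vecMul_one]

end Herm

theorem Continuous.herm {X : Type*} [TopologicalSpace X] {n : ℕ} {x y : X → Fin n → ℂ}
    (hx : Continuous x) (hy : Continuous y) : Continuous fun t => herm (x t) (y t) := by
  unfold _root_.herm
  fun_prop

theorem HasDerivAt.const_mulVec {m ι : Type*} [Fintype m] [Fintype ι] (G : Matrix m ι ℂ)
    {ψ : ℝ → ι → ℂ} {ψ' : ι → ℂ} {t : ℝ} (h : HasDerivAt ψ ψ' t) :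
    HasDerivAt (fun s => G *ᵥ ψ s) (G *ᵥ ψ') t :=
  ((mulVecLin G).toContinuousLinearMap.restrictScalars ℝ).hasFDerivAt.comp_hasDerivAt t h

section TwofoldSymmetry

variable {n : ℕ} {G : Matrix (Fin n) (Fin n) ℂ} {ψ ψ' χ : ℝ → Fin n → ℂ} {ρ σ : ℝ → ℂ}

theorem differentiable_of_mulVec_eq_smul_comp_neg (hχ : Differentiable ℝ χ)
    (hψ : Differentiable ℝ ψ) (hnorm : ∀ φ, herm (χ φ) (ψ φ) = 1)
    (hG : ∀ φ, G *ᵥ ψ φ = ρ φ • ψ (-φ)) : Differentiable ℝ ρ := by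
  have hρ : ρ = fun φ => herm (χ (-φ)) (G *ᵥ ψ φ) := by
    funext φ
    rw [hG, herm_smul_right, hnorm, mul_one]
  rw [hρ]
  unfold herm
  simp only [mulVec, dotProduct]
  fun_prop

theorem mulVec_deriv_eq_of_mulVec_eq_smul_comp_neg (hψ : ∀ t, HasDerivAt ψ (ψ' t) t)
    (hρ : Differentiable ℝ ρ) (hG : ∀ φ, G *ᵥ ψ φ = ρ φ • ψ (-φ)) (φ : ℝ) :
    G *ᵥ ψ' φ = deriv ρ φ • ψ (-φ) - ρ φ • ψ' (-φ) := by
  have hL := (hψ φ).const_mulVec G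
  have hR : HasDerivAt (fun s => ρ s • ψ (-s)) (ρ φ • -ψ' (-φ) + deriv ρ φ • ψ (-φ)) φ :=
    (hρ φ).hasDerivAt.smul ((hψ (-φ)).scomp φ (hasDerivAt_neg φ) |>.congr_deriv (by simp))
  rw [funext hG] at hL
  rw [hL.unique hR, smul_neg]
  abel

theorem sq_eq_one_of_mulVec_eq_smul_comp_neg (hG2 : G * G = 1)
    (hG : ∀ φ, G *ᵥ ψ φ = ρ φ • ψ (-φ)) {φ : ℝ} (hsym : ψ (-φ) = ψ φ) (hne : ψ φ ≠ 0) :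
    ρ φ ^ 2 = 1 := by
  have h : (ρ φ ^ 2) • ψ φ = (1 : ℂ) • ψ φ := by
    calc (ρ φ ^ 2) • ψ φ = G *ᵥ (G *ᵥ ψ φ) := by
          rw [hG φ, hsym, mulVec_smul, hG φ, hsym, smul_smul, sq]
      _ = (1 : ℂ) • ψ φ := by rw [mulVec_mulVec, hG2, one_mulVec, one_smul]
  exact smul_left_injective ℂ hne h

theorem conj_mul_eq_one_of_mulVec_eq_smul_comp_neg (hG1 : Gᴴ * G = 1)
    (hnorm : ∀ φ, herm (χ φ) (ψ φ) = 1)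
    (hGχ : ∀ φ, G *ᵥ χ φ = σ φ • χ (-φ)) (hGψ : ∀ φ, G *ᵥ ψ φ = ρ φ • ψ (-φ)) (φ : ℝ) :
    starRingEnd ℂ (σ φ) * ρ φ = 1 := by
  have h := herm_mulVec_mulVec hG1 (χ φ) (ψ φ)
  rw [hGχ, hGψ, herm_smul_left, herm_smul_right, hnorm, hnorm] at h
  simpa [mul_comm] using h

theorem berry_connection_add_comp_neg {ψα ψβ ψβ' : ℝ → Fin n → ℂ} {ρα ρβ : ℝ → ℂ}
    (hG1 : Gᴴ * G = 1) (hψβ : ∀ t, HasDerivAt ψβ (ψβ' t) t) (hρβ : Differentiable ℝ ρβ)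
    (hnorm : ∀ φ, herm (ψα φ) (ψβ φ) = 1)
    (hGα : ∀ φ, G *ᵥ ψα φ = ρα φ • ψα (-φ))
    (hGβ : ∀ φ, G *ᵥ ψβ φ = ρβ φ • ψβ (-φ)) (φ : ℝ) :
    herm (ψα φ) (ψβ' φ) + herm (ψα (-φ)) (ψβ' (-φ)) = starRingEnd ℂ (ρα φ) * deriv ρβ φ := by
  have h := herm_mulVec_mulVec hG1 (ψα φ) (ψβ' φ)
  rw [hGα, mulVec_deriv_eq_of_mulVec_eq_smul_comp_neg hψβ hρβ hGβ, herm_smul_left,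
    herm_sub_right, herm_smul_right, herm_smul_right, hnorm] at h
  linear_combination -h - herm (ψα (-φ)) (ψβ' (-φ)) *
    conj_mul_eq_one_of_mulVec_eq_smul_comp_neg hG1 hnorm hGα hGβ φ

end TwofoldSymmetry

theorem intervalIntegral_neg_self_eq_integral_add_comp_neg {E : Type*} [NormedAddCommGroup E]
    [NormedSpace ℝ E] {f : ℝ → E} (hf : Continuous f) (a : ℝ) :
    ∫ x in (-a)..a, f x = ∫ x in (0 : ℝ)..a, (f x + f (-x)) := by
  rw [intervalIntegral.integral_add (g := fun x => f (-x)) (hf.intervalIntegrable _ _)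
      ((hf.comp continuous_neg).intervalIntegrable _ _), intervalIntegral.integral_comp_neg f,
    neg_zero, add_comm, intervalIntegral.integral_add_adjacent_intervals
      (hf.intervalIntegrable _ _) (hf.intervalIntegrable _ _)]

theorem eq_mul_cexp_integral_of_hasDerivAt {g B : ℝ → ℂ} (hB : Continuous B)
    (hg : ∀ x, HasDerivAt g (g x * B x) x) (a b : ℝ) :
    g b = g a * Complex.exp (∫ x in a..b, B x) := by
  set F : ℝ → ℂ := fun x => ∫ t in a..x, B t
  have hF : ∀ x, HasDerivAt F (B x) x := fun x =>
    (hB.integral_hasStrictDerivAt a x).hasDerivAt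
  have hu : ∀ x, HasDerivAt (fun y => g y * Complex.exp (-F y)) 0 x := fun x => by
    refine ((hg x).fun_mul (hF x).fun_neg.cexp).congr_deriv ?_
    ring
  have hconst := is_const_of_deriv_eq_zero (fun x => (hu x).differentiableAt)
    (fun x => (hu x).deriv) b a
  simp only [F, intervalIntegral.integral_same, neg_zero, Complex.exp_zero, mul_one] at hconst
  rw [← hconst, mul_assoc, ← Complex.exp_add, neg_add_cancel, Complex.exp_zero, mul_one]

theorem conj_eq_self_of_sq_eq_one {z : ℂ} (hz : z ^ 2 = 1) : starRingEnd ℂ z = z := by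
  rcases sq_eq_one_iff.mp hz with rfl | rfl <;> simp

theorem G_protected_quantized_berry_phase_general (n : ℕ)
    (ψα ψβ ψα' ψβ' : ℝ → Fin n → ℂ)
    (hdα : ∀ i t, HasDerivAt (fun s => ψα s i) (ψα' t i) t)
    (hdβ : ∀ i t, HasDerivAt (fun s => ψβ s i) (ψβ' t i) t)
    (hcβ : ∀ i, Continuous fun t => ψβ' t i)
    (hperα : ∀ φ, ψα (φ + 2 * π) = ψα φ)
    (hnorm : ∀ φ, herm (ψα φ) (ψβ φ) = 1)
    (G : Matrix (Fin n) (Fin n) ℂ)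
    (hG1 : Gᴴ * G = 1) (hG2 : G * G = 1)
    (ρα ρβ : ℝ → ℂ)
    (hGα : ∀ φ, G.mulVec (ψα φ) = ρα φ • ψα (-φ))
    (hGβ : ∀ φ, G.mulVec (ψβ φ) = ρβ φ • ψβ (-φ)) :
    Complex.exp (∫ φ in (-π)..π, herm (ψα φ) (ψβ' φ)) = ρα 0 * ρα π ∧
      (ρα 0) ^ 2 = 1 ∧ (ρα π) ^ 2 = 1 := by
  have hψα : ∀ t, HasDerivAt ψα (ψα' t) t := fun t => hasDerivAt_pi.2 fun i => hdα i t
  have hψβ : ∀ t, HasDerivAt ψβ (ψβ' t) t := fun t => hasDerivAt_pi.2 fun i => hdβ i t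
  have hρβ : Differentiable ℝ ρβ := differentiable_of_mulVec_eq_smul_comp_neg
    (fun t => (hψα t).differentiableAt) (fun t => (hψβ t).differentiableAt) hnorm hGβ
  have hne : ∀ φ, ψα φ ≠ 0 := fun φ h => by simpa [h] using hnorm φ
  have hsq0 : ρα 0 ^ 2 = 1 :=
    sq_eq_one_of_mulVec_eq_smul_comp_neg hG2 hGα (by rw [neg_zero]) (hne 0)
  have hsqπ : ρα π ^ 2 = 1 :=
    sq_eq_one_of_mulVec_eq_smul_comp_neg hG2 hGα (by rw [← hperα (-π)]; congr 1; ring) (hne π)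
  have hA : Continuous fun φ => herm (ψα φ) (ψβ' φ) :=
    (continuous_iff_continuousAt.2 fun t => (hψα t).continuousAt).herm (continuous_pi hcβ)
  have hconj := conj_mul_eq_one_of_mulVec_eq_smul_comp_neg hG1 hnorm hGα hGβ
  have hlog : ∀ φ, HasDerivAt ρβ
      (ρβ φ * (herm (ψα φ) (ψβ' φ) + herm (ψα (-φ)) (ψβ' (-φ)))) φ := fun φ => by
    rw [berry_connection_add_comp_neg hG1 hψβ hρβ hnorm hGα hGβ]
    refine (hρβ φ).hasDerivAt.congr_deriv ?_
    linear_combination -deriv ρβ φ * hconj φ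
  have hB : Continuous fun φ => herm (ψα φ) (ψβ' φ) + herm (ψα (-φ)) (ψβ' (-φ)) :=
    hA.add (hA.comp continuous_neg)
  have hρβπ := eq_mul_cexp_integral_of_hasDerivAt hB hlog 0 π
  have h0 : ρα 0 * ρβ 0 = 1 := conj_eq_self_of_sq_eq_one hsq0 ▸ hconj 0
  have hπ : ρα π * ρβ π = 1 := conj_eq_self_of_sq_eq_one hsqπ ▸ hconj π
  refine ⟨?_, hsq0, hsqπ⟩
  rw [intervalIntegral_neg_self_eq_integral_add_comp_neg hA]
  set E := Complex.exp (∫ φ in (0 : ℝ)..π, (herm (ψα φ) (ψβ' φ) + herm (ψα (-φ)) (ψβ' (-φ))))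
  linear_combination -E * h0 - ρα 0 * hρβπ - ρα 0 * ρβ π * hsqπ + ρα 0 * ρα π * hπ

/-- **G-symmetry–protected quantized Berry phase.**
For a self-closed (2π-periodic, continuously differentiable) normalized pair of
eigenvector families `ψα, ψβ` along a `G`-symmetric loop, with a twofold unitary
point-group operator `G` relating the states at `φ` and `-φ` via
`G ψ(φ) = ρ(φ) ψ(-φ)`, the Berry phase `θ^{αβ} = -i ∫_{-π}^{π} ⟪ψα, ψβ'⟫ dφ` satisfies
`exp(i θ^{αβ}) = ρα(0) ρα(π)`, and `ρα(0), ρα(π)` are the `G`-parities `±1` of the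
states at the two `G`-invariant points, so the Berry phase is quantized to `0` or `π`
modulo `2π`. -/
theorem G_protected_quantized_berry_phase (n : ℕ) (hn : 1 ≤ n)
    (ψα ψβ ψα' ψβ' : ℝ → Fin n → ℂ)
    (hdα : ∀ i t, HasDerivAt (fun s => ψα s i) (ψα' t i) t)
    (hdβ : ∀ i t, HasDerivAt (fun s => ψβ s i) (ψβ' t i) t)
    (hcα : ∀ i, Continuous fun t => ψα' t i)
    (hcβ : ∀ i, Continuous fun t => ψβ' t i)
    (hperα : ∀ φ, ψα (φ + 2 * π) = ψα φ)
    (hperβ : ∀ φ, ψβ (φ + 2 * π) = ψβ φ)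
    (hnorm : ∀ φ, herm (ψα φ) (ψβ φ) = 1)
    (G : Matrix (Fin n) (Fin n) ℂ)
    (hG1 : Gᴴ * G = 1) (hG2 : G * G = 1)
    (ρα ρβ : ℝ → ℂ)
    (hρα : Differentiable ℝ ρα) (hρβ : Differentiable ℝ ρβ)
    (hGα : ∀ φ, G.mulVec (ψα φ) = ρα φ • ψα (-φ))
    (hGβ : ∀ φ, G.mulVec (ψβ φ) = ρβ φ • ψβ (-φ)) :
    Complex.exp (∫ φ in (-π)..π, herm (ψα φ) (ψβ' φ)) = ρα 0 * ρα π ∧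
      (ρα 0) ^ 2 = 1 ∧ (ρα π) ^ 2 = 1 :=
  G_protected_quantized_berry_phase_general n ψα ψβ ψα' ψβ' hdα hdβ hcβ hperα hnorm G hG1 hG2 ρα ρβ
    hGα hGβ
end

section
/- (Nonzero left–right overlap for a simple eigenvalue.) Let H be an n×n complex matrix and let E ∈ ℂ be a root of the characteristic polynomial of H of multiplicity exactly 1. Let v, w ∈ ℂⁿ be nonzero vectors with H·v = E·v and H†·w = conj(E)·w. Then ⟪w, v⟫ ≠ 0. (Hence the M-†-parity of a non-degenerate state in the exact phase on a mirror plane, defined through the mirror expectation value, is well defined and nonzero.) -/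
/-!
Put `ψ = H - E`. As `E` is a simple root, the generalized eigenspace `ker ψ²` is the
one-dimensional eigenspace `ker ψ`, so an eigenvector `v` cannot be of the form `ψ u` (such a `u`
would lie in `ker ψ² = ker ψ`). On the other hand `ψ† w = 0` gives `range ψ ⊆ w^⊥`, and both have
codimension one, so `range ψ = w^⊥`. Hence `⟪w, v⟫ = 0` is impossible.
-/

open Matrix

open Module LinearMap

theorem LinearMap.range_eq_ker_of_comp_eq_zero {K V : Type*} [Field K] [AddCommGroup V]
    [Module K V] [FiniteDimensional K V] {ψ : End K V} {φ : Dual K V} (hφ : φ ≠ 0)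
    (hφψ : φ ∘ₗ ψ = 0) (hψ : finrank K (ker ψ) ≤ 1) : range ψ = ker φ := by
  refine Submodule.eq_of_le_of_finrank_le (range_le_ker_iff.mpr hφψ) ?_
  have := Dual.finrank_ker_add_one_of_ne_zero hφ
  have := ψ.finrank_range_add_finrank_ker
  omega

namespace Module.End

variable {K V : Type*} [Field K] [AddCommGroup V] [Module K V] [FiniteDimensional K V]
  {f : End K V} {μ : K} {v : V} {φ : Dual K V}

theorem HasEigenvector.notMem_range_sub_smul_one
    (hmult : finrank K (f.maxGenEigenspace μ) ≤ 1) (hv : f.HasEigenvector μ v) :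
    v ∉ range (f - μ • 1) := by
  rintro ⟨u, rfl⟩
  have hv₀ : 1 ≤ finrank K (f.eigenspace μ) :=
    Submodule.one_le_finrank_iff.mpr (hasEigenvalue_of_hasEigenvector hv)
  have hgen : f.eigenspace μ = f.genEigenspace μ (2 : ℕ) :=
    Submodule.eq_of_le_of_finrank_le (eigenspace_le_genEigenspace two_pos)
      ((Submodule.finrank_mono (f.genEigenspace_le_maximal μ 2)).trans (hmult.trans hv₀))
  have hu : u ∈ f.genEigenspace μ (2 : ℕ) := by
    rw [mem_genEigenspace_nat, mem_ker, pow_two, mul_apply, ← mem_ker, ← eigenspace_def]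
    exact hv.1
  rw [← hgen, eigenspace_def, mem_ker] at hu
  exact hv.2 hu

theorem HasEigenvector.dual_apply_ne_zero (hv : f.HasEigenvector μ v) (hφ : φ ≠ 0)
    (hφf : φ ∘ₗ f = μ • φ) (hmult : finrank K (f.maxGenEigenspace μ) ≤ 1) : φ v ≠ 0 := by
  have hφψ : φ ∘ₗ (f - μ • 1) = 0 := by
    rw [comp_sub, hφf, comp_smul, one_eq_id, comp_id, sub_self]
  have hker : finrank K (ker (f - μ • 1)) ≤ 1 := by
    rw [← eigenspace_def]
    exact (Submodule.finrank_mono eigenspace_le_maxGenEigenspace).trans hmult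
  intro hφv
  apply hv.notMem_range_sub_smul_one hmult
  rw [range_eq_ker_of_comp_eq_zero hφ hφψ hker]
  exact hφv

end Module.End

theorem Matrix.star_vecMul_eq_smul_of_conjTranspose_mulVec_eq {R n : Type*} [CommRing R]
    [StarRing R] [Fintype n] {H : Matrix n n R} {E : R} {w : n → R}
    (hw : Hᴴ *ᵥ w = starRingEnd R E • w) : star w ᵥ* H = E • star w := by
  rw [← conjTranspose_conjTranspose H, ← star_mulVec, hw, star_smul, starRingEnd_apply,
    star_star]

/-- **Nonzero left–right overlap for a simple eigenvalue.**
If `E` is a root of the characteristic polynomial of `H` of multiplicity exactly `1`,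
and `v, w` are nonzero right and left eigenvectors for `E` (`H v = E v`,
`H† w = conj(E) w`), then `⟪w, v⟫ ≠ 0`. Hence the M-†-parity of a non-degenerate state
in the exact phase on a mirror plane, defined through the mirror expectation value, is
well defined and nonzero. -/
theorem simple_eigenvalue_left_right_overlap_ne_zero (n : ℕ)
    (H : Matrix (Fin n) (Fin n) ℂ) (E : ℂ)
    (hmult : H.charpoly.rootMultiplicity E = 1)
    (v w : Fin n → ℂ) (hv : v ≠ 0) (hw : w ≠ 0)
    (hHv : H.mulVec v = E • v)
    (hHw : Hᴴ.mulVec w = starRingEnd ℂ E • w) :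
    herm w v ≠ 0 := by
  set φ := dotProductEquiv ℂ (Fin n) (star w)
  have hφ : φ ≠ 0 := by
    rw [Ne, LinearEquiv.map_eq_zero_iff, star_eq_zero]
    exact hw
  have hφH : φ ∘ₗ H.toLin' = E • φ := LinearMap.ext fun x => by
    simp [φ, dotProduct_mulVec, star_vecMul_eq_smul_of_conjTranspose_mulVec_eq hHw]
  have hherm : herm w v = φ v := by
    simp [herm, φ, dotProduct, RCLike.star_def]
  rw [hherm]
  refine Module.End.HasEigenvector.dual_apply_ne_zero ⟨?_, hv⟩ hφ hφH ?_
  · rw [Module.End.mem_eigenspace_iff, toLin'_apply, hHv]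
  · rw [finrank_maxGenEigenspace_eq, charpoly_toLin', hmult]
end
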